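/- Let k be a field and consider the polynomial ring k[u,v,S,T]. Then the ideal (uv, uS + vT) admits the primary decomposition (uv, uS + vT) = (u², uv, v², uS + vT) ∩ (S, v) ∩ (T, u); in particular these three ideals intersect exactly in (uv, uS + vT). -/
import Mathlib


open MvPolynomial

noncomputable section

/-- substitution map killing `v = X 1` and `S = X 2`. -/
def g2 (k : Type*) [Field k] : Fin 4 → MvPolynomial (Fin 4) k
  | 0 => X 0 | 1 => 0 | 2 => 0 | 3 => X 3

@[simp] lemma g2_0 (k : Type*) [Field k] : g2 k 0 = X 0 := rfl
@[simp] lemma g2_1 (k : Type*) [Field k] : g2 k 1 = 0 := rfl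
@[simp] lemma g2_2 (k : Type*) [Field k] : g2 k 2 = 0 := rfl
@[simp] lemma g2_3 (k : Type*) [Field k] : g2 k 3 = X 3 := rfl

/-- substitution map killing `u = X 0` and `T = X 3`. -/
def g3 (k : Type*) [Field k] : Fin 4 → MvPolynomial (Fin 4) k
  | 0 => 0 | 1 => X 1 | 2 => X 2 | 3 => 0

@[simp] lemma g3_0 (k : Type*) [Field k] : g3 k 0 = 0 := rfl
@[simp] lemma g3_1 (k : Type*) [Field k] : g3 k 1 = X 1 := rfl
@[simp] lemma g3_2 (k : Type*) [Field k] : g3 k 2 = X 2 := rfl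
@[simp] lemma g3_3 (k : Type*) [Field k] : g3 k 3 = 0 := rfl

lemma sub_aeval_mem {k : Type*} [CommRing k] (J : Ideal (MvPolynomial (Fin 4) k))
    (g : Fin 4 → MvPolynomial (Fin 4) k) (hg : ∀ i, X i - g i ∈ J)
    (p : MvPolynomial (Fin 4) k) : p - aeval g p ∈ J := by
  induction p using MvPolynomial.induction_on with
  | C a => simp [MvPolynomial.algebraMap_eq]
  | add p q hp hq =>
      rw [map_add]
      have := J.add_mem hp hq
      convert this using 1; ring
  | mul_X p i hp =>
      rw [map_mul, aeval_X]
      have h : p * X i - aeval g p * g i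
          = (p - aeval g p) * X i + aeval g p * (X i - g i) := by ring
      rw [h]
      exact J.add_mem (J.mul_mem_right _ hp) (J.mul_mem_left _ (hg i))

lemma hg2lem (k : Type*) [Field k] :
    ∀ i : Fin 4, X i - g2 k i ∈ Ideal.span {(X 2 : MvPolynomial (Fin 4) k), X 1} := by
  intro i
  fin_cases i
  · show X 0 - g2 k 0 ∈ _
    rw [show g2 k 0 = X 0 from rfl, sub_self]; exact Ideal.zero_mem _
  · show X 1 - g2 k 1 ∈ _
    rw [show g2 k 1 = 0 from rfl, sub_zero]
    exact Ideal.subset_span (Set.mem_insert_iff.2 (Or.inr rfl))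
  · show X 2 - g2 k 2 ∈ _
    rw [show g2 k 2 = 0 from rfl, sub_zero]
    exact Ideal.subset_span (Set.mem_insert _ _)
  · show X 3 - g2 k 3 ∈ _
    rw [show g2 k 3 = X 3 from rfl, sub_self]; exact Ideal.zero_mem _

lemma hg3lem (k : Type*) [Field k] :
    ∀ i : Fin 4, X i - g3 k i ∈ Ideal.span {(X 3 : MvPolynomial (Fin 4) k), X 0} := by
  intro i
  fin_cases i
  · show X 0 - g3 k 0 ∈ _
    rw [show g3 k 0 = 0 from rfl, sub_zero]
    exact Ideal.subset_span (Set.mem_insert_iff.2 (Or.inr rfl))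
  · show X 1 - g3 k 1 ∈ _
    rw [show g3 k 1 = X 1 from rfl, sub_self]; exact Ideal.zero_mem _
  · show X 2 - g3 k 2 ∈ _
    rw [show g3 k 2 = X 2 from rfl, sub_self]; exact Ideal.zero_mem _
  · show X 3 - g3 k 3 ∈ _
    rw [show g3 k 3 = 0 from rfl, sub_zero]
    exact Ideal.subset_span (Set.mem_insert _ _)

/-- in `k[u,v,S,T]` (variables `u = X 0`, `v = X 1`, `S = X 2`, `T = X 3`),
the ideal `(uv, uS + vT)` admits the primary decomposition
`(uv, uS + vT) = (u², uv, v², uS + vT) ∩ (S, v) ∩ (T, u)`. -/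
theorem stmt_11 (k : Type*) [Field k] :
    Ideal.span {(X 0 * X 1 : MvPolynomial (Fin 4) k), X 0 * X 2 + X 1 * X 3} =
      Ideal.span {(X 0 ^ 2 : MvPolynomial (Fin 4) k), X 0 * X 1, X 1 ^ 2,
          X 0 * X 2 + X 1 * X 3} ⊓
        Ideal.span {(X 2 : MvPolynomial (Fin 4) k), X 1} ⊓
        Ideal.span {(X 3 : MvPolynomial (Fin 4) k), X 0} := by
  apply le_antisymm
  · refine le_inf (le_inf ?_ ?_) ?_
    · apply Ideal.span_mono
      intro x hx
      simp only [Set.mem_insert_iff, Set.mem_singleton_iff] at hx ⊢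
      tauto
    · rw [Ideal.span_le]
      intro x hx
      simp only [Set.mem_insert_iff, Set.mem_singleton_iff] at hx
      rcases hx with rfl | rfl
      · exact Ideal.mem_span_pair.2 ⟨0, X 0, by ring⟩
      · exact Ideal.mem_span_pair.2 ⟨X 0, X 3, by ring⟩
    · rw [Ideal.span_le]
      intro x hx
      simp only [Set.mem_insert_iff, Set.mem_singleton_iff] at hx
      rcases hx with rfl | rfl
      · exact Ideal.mem_span_pair.2 ⟨0, X 1, by ring⟩
      · exact Ideal.mem_span_pair.2 ⟨X 1, X 2, by ring⟩
  · intro f hf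
    simp only [Ideal.mem_inf] at hf
    obtain ⟨⟨h1, h2⟩, h3⟩ := hf
    rw [Ideal.mem_span_insert] at h1
    obtain ⟨a, z1, hz1, rfl⟩ := h1
    rw [Ideal.mem_span_insert] at hz1
    obtain ⟨b, z2, hz2, rfl⟩ := hz1
    rw [Ideal.mem_span_insert] at hz2
    obtain ⟨c, z3, hz3, rfl⟩ := hz2
    rw [Ideal.mem_span_singleton] at hz3
    obtain ⟨d, rfl⟩ := hz3
    -- step 1: a * X0^2 ∈ (X2, X1)
    have ha2 : a * X 0 ^ 2 ∈ Ideal.span {(X 2 : MvPolynomial (Fin 4) k), X 1} := by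
      have hrest : b * (X 0 * X 1) + (c * X 1 ^ 2 + (X 0 * X 2 + X 1 * X 3) * d)
          ∈ Ideal.span {(X 2 : MvPolynomial (Fin 4) k), X 1} :=
        Ideal.mem_span_pair.2 ⟨X 0 * d, b * X 0 + c * X 1 + X 3 * d, by ring⟩
      have heq : a * X 0 ^ 2 =
          (a * X 0 ^ 2 + (b * (X 0 * X 1) + (c * X 1 ^ 2 + (X 0 * X 2 + X 1 * X 3) * d)))
            - (b * (X 0 * X 1) + (c * X 1 ^ 2 + (X 0 * X 2 + X 1 * X 3) * d)) := by ring
      rw [heq]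
      exact Ideal.sub_mem _ h2 hrest
    -- step 2: c * X1^2 ∈ (X3, X0)
    have hc3 : c * X 1 ^ 2 ∈ Ideal.span {(X 3 : MvPolynomial (Fin 4) k), X 0} := by
      have hrest : a * X 0 ^ 2 + b * (X 0 * X 1) + (X 0 * X 2 + X 1 * X 3) * d
          ∈ Ideal.span {(X 3 : MvPolynomial (Fin 4) k), X 0} :=
        Ideal.mem_span_pair.2 ⟨X 1 * d, a * X 0 + b * X 1 + X 2 * d, by ring⟩
      have heq : c * X 1 ^ 2 =
          (a * X 0 ^ 2 + (b * (X 0 * X 1) + (c * X 1 ^ 2 + (X 0 * X 2 + X 1 * X 3) * d)))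
            - (a * X 0 ^ 2 + b * (X 0 * X 1) + (X 0 * X 2 + X 1 * X 3) * d) := by ring
      rw [heq]
      exact Ideal.sub_mem _ h3 hrest
    -- step 3: a ∈ (X2, X1)
    obtain ⟨x2, y2, hxy2⟩ := Ideal.mem_span_pair.1 ha2
    have h0 := congrArg (aeval (g2 k)) hxy2
    simp only [map_add, map_mul, map_pow, aeval_X, g2_0, g2_1, g2_2, g2_3,
      mul_zero, zero_add, add_zero] at h0
    have ha0 : aeval (g2 k) a = 0 := by
      rcases mul_eq_zero.1 h0.symm with h | h
      · exact h
      · exact absurd h (pow_ne_zero _ (X_ne_zero _))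
    have haJ2 : a ∈ Ideal.span {(X 2 : MvPolynomial (Fin 4) k), X 1} := by
      have := sub_aeval_mem _ _ (hg2lem k) a
      rwa [ha0, sub_zero] at this
    -- step 4: c ∈ (X3, X0)
    obtain ⟨x3, y3, hxy3⟩ := Ideal.mem_span_pair.1 hc3
    have h0' := congrArg (aeval (g3 k)) hxy3
    simp only [map_add, map_mul, map_pow, aeval_X, g3_0, g3_1, g3_2, g3_3,
      mul_zero, zero_add, add_zero] at h0'
    have hc0 : aeval (g3 k) c = 0 := by
      rcases mul_eq_zero.1 h0'.symm with h | h
      · exact h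
      · exact absurd h (pow_ne_zero _ (X_ne_zero _))
    have hcJ3 : c ∈ Ideal.span {(X 3 : MvPolynomial (Fin 4) k), X 0} := by
      have := sub_aeval_mem _ _ (hg3lem k) c
      rwa [hc0, sub_zero] at this
    -- step 5: conclude
    obtain ⟨xa, ya, hae⟩ := Ideal.mem_span_pair.1 haJ2
    obtain ⟨xc, yc, hce⟩ := Ideal.mem_span_pair.1 hcJ3
    have haI : a * X 0 ^ 2 ∈
        Ideal.span {(X 0 * X 1 : MvPolynomial (Fin 4) k), X 0 * X 2 + X 1 * X 3} :=
      Ideal.mem_span_pair.2 ⟨-xa * X 3 + ya * X 0, xa * X 0, by rw [← hae]; ring⟩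
    have hcI : c * X 1 ^ 2 ∈
        Ideal.span {(X 0 * X 1 : MvPolynomial (Fin 4) k), X 0 * X 2 + X 1 * X 3} :=
      Ideal.mem_span_pair.2 ⟨-xc * X 2 + yc * X 1, xc * X 1, by rw [← hce]; ring⟩
    have hbI : b * (X 0 * X 1) ∈
        Ideal.span {(X 0 * X 1 : MvPolynomial (Fin 4) k), X 0 * X 2 + X 1 * X 3} :=
      Ideal.mul_mem_left _ _ (Ideal.subset_span (Set.mem_insert _ _))
    have hdI : (X 0 * X 2 + X 1 * X 3) * d ∈
        Ideal.span {(X 0 * X 1 : MvPolynomial (Fin 4) k), X 0 * X 2 + X 1 * X 3} :=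
      Ideal.mul_mem_right _ _ (Ideal.subset_span (Set.mem_insert_iff.2 (Or.inr rfl)))
    exact add_mem haI (add_mem hbI (add_mem hcI hdI))
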